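/- For n = 2 and d ≥ 2, a deterministic strategy g is optimal if and only if g satisfies Property 2; likewise, for d = 2 and even n > 2, a deterministic strategy g is optimal if and only if g satisfies Property 2. -/

import Mathlib

/-!
For `n = 2`, the best answer to a word `x` scores 2 if `x` is a row of `g` and 1 if `x` meets
some column image, so the total score is `#rows + d² - ∏ⱼ #(column image)ᶜ ≤ d + d²`, with
equality exactly when some column is a permutation.

For `d = 2`, write `2 max a b = a + b + |a - b|`. The sum of the two similarities has the same
total for every strategy, and `Sim (g 0) x - Sim (g 1) x` is a `±1` walk over the `k` columns
where the rows differ. Summed over all words, the absolute value of such a walk grows at each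
even step and stays the same at each odd step. So for even `n` it is maximal exactly when
`k ≥ n - 1`, which is Property 2.
-/

open Finset

/-- Similarity: number of positions where two strings agree. -/
def Sim (n d : ℕ) (z x : Fin n → Fin d) : ℕ :=
  (Finset.univ.filter fun j => z j = x j).card

/-- Best approximation of a word `x` by the rows of strategy `g`. -/
def maxSim (n d : ℕ) (g : Fin d → Fin n → Fin d) (x : Fin n → Fin d) : ℕ :=
  Finset.univ.sup fun y => Sim n d (g y) x

/-- Value (average success probability) of a strategy, assuming Alice's
optimal encoding. -/
def Value (n d : ℕ) (g : Fin d → Fin n → Fin d) : ℚ :=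
  (∑ x : Fin n → Fin d, (maxSim n d g x : ℚ)) / (n * d ^ n)

/-- A strategy is optimal if no strategy has a larger value. -/
def IsOptimal (n d : ℕ) (g : Fin d → Fin n → Fin d) : Prop :=
  ∀ f : Fin d → Fin n → Fin d, Value n d f ≤ Value n d g

/-- Property 1: every column of the decoding matrix is injective. -/
def Property1 (n d : ℕ) (g : Fin d → Fin n → Fin d) : Prop :=
  ∀ j : Fin n, Function.Injective fun y => g y j

/-- Property 2: at most one column of the decoding matrix fails to be injective. -/
def Property2 (n d : ℕ) (g : Fin d → Fin n → Fin d) : Prop :=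
  ∀ j₁ j₂ : Fin n, ¬ Function.Injective (fun y => g y j₁) →
    ¬ Function.Injective (fun y => g y j₂) → j₁ = j₂

open Function

theorem sim_le (n d : ℕ) (z x : Fin n → Fin d) : Sim n d z x ≤ n :=
  (card_filter_le _ _).trans_eq (card_fin n)

theorem le_sim_iff_eq {n d : ℕ} {z x : Fin n → Fin d} : n ≤ Sim n d z x ↔ z = x := by
  have h : Sim n d z x = Fintype.card (Fin n) ↔ z = x := by
    rw [Sim, card_eq_iff_eq_univ, filter_eq_self, funext_iff]
    simp
  rw [Fintype.card_fin] at h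
  rw [← h]
  exact ⟨fun h' => le_antisymm (sim_le n d z x) h', Eq.ge⟩

theorem one_le_sim_iff {n d : ℕ} {z x : Fin n → Fin d} : 1 ≤ Sim n d z x ↔ ∃ j, z j = x j := by
  simp [Sim, Nat.one_le_iff_ne_zero]

theorem le_maxSim_iff {n d k : ℕ} (hk : 0 < k) (g : Fin d → Fin n → Fin d) (x : Fin n → Fin d) :
    k ≤ maxSim n d g x ↔ ∃ y, k ≤ Sim n d (g y) x := by
  simp [maxSim, Finset.le_sup_iff hk]

theorem sum_sim_eq_sum_sim_zero {n d : ℕ} [NeZero d] (z : Fin n → Fin d) :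
    ∑ x, Sim n d z x = ∑ x, Sim n d 0 x := by
  refine Fintype.sum_equiv (Equiv.addRight (-z)) _ _ fun x => ?_
  simp only [Sim, Equiv.coe_addRight, Pi.add_apply, Pi.neg_apply, Pi.zero_apply,
    eq_add_neg_iff_add_eq, zero_add]

def score (n d : ℕ) (g : Fin d → Fin n → Fin d) : ℕ := ∑ x, maxSim n d g x

theorem isOptimal_iff_score_le {n d : ℕ} (hn : 0 < n) (hd : 0 < d) (g : Fin d → Fin n → Fin d) :
    IsOptimal n d g ↔ ∀ f, score n d f ≤ score n d g := by
  have hpos : (0 : ℚ) < n * d ^ n := by positivity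
  simp only [IsOptimal, Value, div_le_div_iff_of_pos_right hpos, score, ← Nat.cast_sum,
    Nat.cast_le]

theorem injective_fin_two_iff {α : Type*} (f : Fin 2 → α) : Injective f ↔ f 0 ≠ f 1 := by
  refine ⟨fun h e => zero_ne_one (h e), fun h a b hab => ?_⟩
  fin_cases a <;> fin_cases b <;> simp_all [eq_comm]

theorem card_compl_image_eq_zero_iff {d : ℕ} (f : Fin d → Fin d) :
    #(univ.image f)ᶜ = 0 ↔ Injective f := by
  rw [card_compl, Fintype.card_fin, Nat.sub_eq_zero_iff_le, ← Set.injOn_univ, ← coe_univ,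
    ← card_image_iff, card_fin]
  exact ⟨fun h => le_antisymm (card_image_le.trans_eq (card_fin d)) h, Eq.ge⟩

theorem card_filter_not_exists_eq_prod {n d : ℕ} (g : Fin d → Fin n → Fin d) :
    #{x : Fin n → Fin d | ¬ ∃ y j, g y j = x j} = ∏ j, #(univ.image fun y => g y j)ᶜ := by
  rw [← Fintype.card_piFinset]
  congr 1
  ext x
  simp [Fintype.mem_piFinset, forall_comm (α := Fin d)]

section WordLengthTwo

variable {d : ℕ}

theorem maxSim_two_eq (g : Fin d → Fin 2 → Fin d) (x : Fin 2 → Fin d) :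
    maxSim 2 d g x = (if ∃ y, g y = x then 1 else 0) + (if ∃ y j, g y j = x j then 1 else 0) := by
  have h₂ : 2 ≤ maxSim 2 d g x ↔ ∃ y, g y = x := by simp [le_maxSim_iff, le_sim_iff_eq]
  have h₁ : 1 ≤ maxSim 2 d g x ↔ ∃ y j, g y j = x j := by simp [le_maxSim_iff, one_le_sim_iff]
  have hle : maxSim 2 d g x ≤ 2 := Finset.sup_le fun y _ => sim_le 2 d (g y) x
  simp only [← h₂, ← h₁]
  split_ifs <;> omega

theorem score_two_add_mul (g : Fin d → Fin 2 → Fin d) :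
    score 2 d g + #(univ.image fun y => g y 0)ᶜ * #(univ.image fun y => g y 1)ᶜ
      = #(univ.image g) + d ^ 2 := by
  have hrows : ∑ x, (if ∃ y, g y = x then 1 else 0) = #(univ.image g) := by
    rw [← card_filter]
    congr 1
    ext x
    simp
  have hcols :=
    card_filter_add_card_filter_not (s := univ) fun x : Fin 2 → Fin d => ∃ y j, g y j = x j
  rw [card_filter_not_exists_eq_prod, Fin.prod_univ_two, card_univ, Fintype.card_fun,
    Fintype.card_fin, Fintype.card_fin] at hcols
  rw [score, sum_congr rfl fun x _ => maxSim_two_eq g x, sum_add_distrib, hrows, ← card_filter]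
  omega

theorem score_two_le (g : Fin d → Fin 2 → Fin d) : score 2 d g ≤ d ^ 2 + d := by
  have := score_two_add_mul g
  have := card_image_le (s := univ) (f := g)
  rw [card_fin] at this
  omega

theorem score_two_eq_iff (g : Fin d → Fin 2 → Fin d) :
    score 2 d g = d ^ 2 + d ↔ (Injective fun y => g y 0) ∨ (Injective fun y => g y 1) := by
  have hsum := score_two_add_mul g
  constructor
  · rw [← card_compl_image_eq_zero_iff, ← card_compl_image_eq_zero_iff, ← mul_eq_zero]
    have := card_image_le (s := univ) (f := g)
    rw [card_fin] at this
    omega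
  · intro hcols
    have hg : Injective g := hcols.elim (Injective.of_comp (f := fun z : Fin 2 → Fin d => z 0))
      (Injective.of_comp (f := fun z : Fin 2 → Fin d => z 1))
    rw [← card_compl_image_eq_zero_iff, ← card_compl_image_eq_zero_iff, ← mul_eq_zero] at hcols
    rw [card_image_of_injective _ hg, card_fin] at hsum
    omega

theorem property2_two_iff (g : Fin d → Fin 2 → Fin d) :
    Property2 2 d g ↔ (Injective fun y => g y 0) ∨ (Injective fun y => g y 1) := by
  constructor
  · intro h
    by_contra! hc
    exact zero_ne_one (h 0 1 hc.1 hc.2)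
  · rintro h j₁ j₂ h₁ h₂
    fin_cases j₁ <;> fin_cases j₂ <;> simp_all

theorem isOptimal_two_iff (hd : 0 < d) (g : Fin d → Fin 2 → Fin d) :
    IsOptimal 2 d g ↔ Property2 2 d g := by
  have hid : score 2 d (fun y _ => y) = d ^ 2 + d :=
    (score_two_eq_iff _).mpr (Or.inl fun _ _ => id)
  rw [isOptimal_iff_score_le two_pos hd, property2_two_iff, ← score_two_eq_iff]
  exact ⟨fun h => le_antisymm (score_two_le g) (hid ▸ h _), fun h f => h ▸ score_two_le f⟩

end WordLengthTwo

section BinaryAlphabet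

variable {n : ℕ}

def spin (a : Fin 2) : ℤ := if a = 0 then 1 else -1

theorem spin_add_one (a : Fin 2) : spin (a + 1) = -spin a := by
  fin_cases a <;> decide

def discrepancy (s : Finset (Fin n)) (y : Fin n → Fin 2) : ℤ := ∑ j ∈ s, spin (y j)

def spread (s : Finset (Fin n)) : ℕ := ∑ y : Fin n → Fin 2, (discrepancy s y).natAbs

theorem discrepancy_eq (s : Finset (Fin n)) (y : Fin n → Fin 2) :
    discrepancy s y = #s - 2 * #{j ∈ s | y j ≠ 0} := by
  rw [discrepancy, card_filter, card_eq_sum_ones]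
  push_cast
  rw [mul_sum, ← sum_sub_distrib]
  refine sum_congr rfl fun j _ => ?_
  by_cases h : y j = 0 <;> simp [spin, h]

theorem even_card_of_discrepancy_eq_zero {s : Finset (Fin n)} {y : Fin n → Fin 2}
    (h : discrepancy s y = 0) : Even #s := by
  rw [discrepancy_eq] at h
  exact ⟨#{j ∈ s | y j ≠ 0}, by omega⟩

theorem exists_discrepancy_eq_zero {s : Finset (Fin n)} (h : Even #s) :
    ∃ y, discrepancy s y = 0 := by
  obtain ⟨t, hts, ht⟩ := exists_subset_card_eq (Nat.div_le_self #s 2)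
  refine ⟨fun j => if j ∈ t then 1 else 0, ?_⟩
  have hfilter : ({j ∈ s | (if j ∈ t then 1 else 0 : Fin 2) ≠ 0} : Finset _) = t := by
    ext j
    by_cases hj : j ∈ t
    · simp [hj, hts hj]
    · simp [hj]
  rw [discrepancy_eq, hfilter, ht]
  obtain ⟨k, hk⟩ := h
  omega

theorem discrepancy_insert {s : Finset (Fin n)} {j : Fin n} (hj : j ∉ s) (y : Fin n → Fin 2) :
    discrepancy (insert j s) y = discrepancy s y + spin (y j) := by
  rw [discrepancy, sum_insert hj, add_comm, discrepancy]

theorem discrepancy_add_single {s : Finset (Fin n)} {j : Fin n} (hj : j ∉ s) (y : Fin n → Fin 2) :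
    discrepancy s (y + Pi.single j 1) = discrepancy s y :=
  sum_congr rfl fun k hk => by
    rw [Pi.add_apply, Pi.single_eq_of_ne (ne_of_mem_of_not_mem hk hj), add_zero]

theorem natAbs_add_add_natAbs_sub {t e : ℤ} (he : e = 1 ∨ e = -1) :
    (t + e).natAbs + (t - e).natAbs = 2 * t.natAbs + 2 * if t = 0 then 1 else 0 := by
  split_ifs <;> omega

theorem spread_insert {s : Finset (Fin n)} {j : Fin n} (hj : j ∉ s) :
    spread (insert j s) = spread s + #{y | discrepancy s y = 0} := by
  -- Changing the `j`-th letter fixes `discrepancy s` and flips `spin (y j)`.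
  have hflip : ∑ y, (discrepancy s y + spin (y j)).natAbs
      = ∑ y, (discrepancy s y - spin (y j)).natAbs := by
    refine Fintype.sum_equiv (Equiv.addRight (Pi.single j 1)) _ _ fun y => ?_
    simp only [Equiv.coe_addRight, discrepancy_add_single hj, Pi.add_apply, Pi.single_eq_same,
      spin_add_one, sub_neg_eq_add]
  have hspin : ∀ a, spin a = 1 ∨ spin a = -1 := by decide
  have : 2 * spread (insert j s) = 2 * spread s + 2 * #{y | discrepancy s y = 0} :=
    calc 2 * spread (insert j s)
        = ∑ y, ((discrepancy s y + spin (y j)).natAbs + (discrepancy s y - spin (y j)).natAbs) := by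
          rw [sum_add_distrib, ← hflip, ← two_mul]
          simp only [spread, discrepancy_insert hj]
      _ = ∑ y, (2 * (discrepancy s y).natAbs + 2 * if discrepancy s y = 0 then 1 else 0) :=
          sum_congr rfl fun y _ => natAbs_add_add_natAbs_sub (hspin _)
      _ = 2 * spread s + 2 * #{y | discrepancy s y = 0} := by
          rw [sum_add_distrib, ← mul_sum, ← mul_sum, card_filter, spread]
  omega

theorem spread_insert_of_odd {s : Finset (Fin n)} {j : Fin n} (hj : j ∉ s) (hs : ¬ Even #s) :
    spread (insert j s) = spread s := by
  rw [spread_insert hj, card_eq_zero.mpr, add_zero]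
  exact filter_eq_empty_iff.mpr fun y _ h => hs (even_card_of_discrepancy_eq_zero h)

theorem spread_lt_spread_insert_of_even {s : Finset (Fin n)} {j : Fin n} (hj : j ∉ s)
    (hs : Even #s) : spread s < spread (insert j s) := by
  obtain ⟨y, hy⟩ := exists_discrepancy_eq_zero hs
  rw [spread_insert hj]
  exact Nat.lt_add_of_pos_right (card_pos.mpr ⟨y, by simp [hy]⟩)

theorem spread_le_spread_insert (j : Fin n) (s : Finset (Fin n)) :
    spread s ≤ spread (insert j s) := by
  by_cases hj : j ∈ s
  · rw [insert_eq_of_mem hj]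
  · rw [spread_insert hj]
    exact Nat.le_add_right _ _

theorem spread_mono : Monotone (spread (n := n)) := by
  intro s t hst
  rw [← union_sdiff_of_subset hst]
  generalize t \ s = u
  induction u using Finset.induction_on with
  | empty => rw [union_empty]
  | insert j u _ ih => exact ih.trans (union_insert j s u ▸ spread_le_spread_insert j _)

theorem spread_eq_spread_univ_of_le_card (hn : Even n) {s : Finset (Fin n)} (hs : n - 1 ≤ #s) :
    spread s = spread (univ : Finset (Fin n)) := by
  by_cases hj : ∃ j, j ∉ s
  · obtain ⟨j, hj⟩ := hj
    have hlt : #s < n := (card_lt_univ_of_notMem hj).trans_eq (Fintype.card_fin n)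
    have hins : insert j s = univ :=
      eq_univ_of_card _ (by rw [card_insert_of_notMem hj, Fintype.card_fin]; omega)
    have hodd : ¬ Even #s := by
      obtain ⟨k, hk⟩ := hn
      rw [Nat.not_even_iff_odd]
      exact ⟨k - 1, by omega⟩
    rw [← hins, spread_insert_of_odd hj hodd]
  · rw [eq_univ_of_forall (not_exists_not.mp hj)]

theorem spread_lt_spread_univ (hn : Even n) {s : Finset (Fin n)} (hs : #s < n - 1) :
    spread s < spread (univ : Finset (Fin n)) := by
  obtain ⟨t, hst, -, ht⟩ := exists_subsuperset_card_eq (subset_univ s) (n := n - 2) (by omega)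
    (by simp only [card_univ, Fintype.card_fin]; omega)
  obtain ⟨j, hj⟩ : ∃ j, j ∉ t := by
    by_contra! h
    rw [eq_univ_of_forall h, card_univ, Fintype.card_fin] at ht
    omega
  have heven : Even #t := by
    obtain ⟨k, hk⟩ := hn
    exact ⟨k - 1, by omega⟩
  calc spread s ≤ spread t := spread_mono hst
    _ < spread (insert j t) := spread_lt_spread_insert_of_even hj heven
    _ ≤ spread univ := spread_mono (subset_univ _)

theorem spread_eq_spread_univ_iff (hn : Even n) {s : Finset (Fin n)} :
    spread s = spread (univ : Finset (Fin n)) ↔ n - 1 ≤ #s := by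
  refine ⟨fun h => ?_, spread_eq_spread_univ_of_le_card hn⟩
  by_contra! hs
  exact (spread_lt_spread_univ hn hs).ne h

theorem maxSim_binary_eq (g : Fin 2 → Fin n → Fin 2) (x : Fin n → Fin 2) :
    maxSim n 2 g x = max (Sim n 2 (g 0) x) (Sim n 2 (g 1) x) := by
  simp [maxSim, Fin.univ_succ]

def diffColumns (g : Fin 2 → Fin n → Fin 2) : Finset (Fin n) := {j | g 0 j ≠ g 1 j}

theorem sim_sub_sim_eq_discrepancy (g : Fin 2 → Fin n → Fin 2) (x : Fin n → Fin 2) :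
    (Sim n 2 (g 0) x : ℤ) - Sim n 2 (g 1) x = discrepancy (diffColumns g) (x - g 0) := by
  have hcol : ∀ a b c : Fin 2, ((if a = c then 1 else 0) - (if b = c then 1 else 0) : ℤ)
      = if a ≠ b then spin (c - a) else 0 := by
    decide
  simp only [Sim, card_filter, Nat.cast_sum, Nat.cast_ite, Nat.cast_one, Nat.cast_zero,
    ← sum_sub_distrib, hcol, discrepancy, diffColumns, sum_filter, Pi.sub_apply]

theorem two_mul_score_binary (g : Fin 2 → Fin n → Fin 2) :
    2 * score n 2 g = 2 * ∑ x, Sim n 2 0 x + spread (diffColumns g) := by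
  have hmax : ∀ x, 2 * maxSim n 2 g x
      = Sim n 2 (g 0) x + Sim n 2 (g 1) x + (discrepancy (diffColumns g) (x - g 0)).natAbs := by
    intro x
    rw [maxSim_binary_eq, ← sim_sub_sim_eq_discrepancy]
    omega
  have hspread : ∑ x, (discrepancy (diffColumns g) (x - g 0)).natAbs = spread (diffColumns g) :=
    Fintype.sum_equiv (Equiv.subRight (g 0)) _ _ fun _ => rfl
  rw [score, mul_sum, sum_congr rfl fun x _ => hmax x, sum_add_distrib, sum_add_distrib,
    sum_sim_eq_sum_sim_zero (g 0), sum_sim_eq_sum_sim_zero (g 1), hspread, two_mul]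

theorem property2_binary_iff (g : Fin 2 → Fin n → Fin 2) :
    Property2 n 2 g ↔ n - 1 ≤ #(diffColumns g) := by
  have hsplit := card_filter_add_card_filter_not (s := univ) fun j => g 0 j = g 1 j
  rw [card_univ, Fintype.card_fin] at hsplit
  have : Property2 n 2 g ↔ #{j | g 0 j = g 1 j} ≤ 1 := by
    simp only [Property2, injective_fin_two_iff, not_not, card_le_one_iff, mem_filter, mem_univ,
      true_and]
  rw [this, diffColumns]
  simp only [ne_eq]
  omega

theorem isOptimal_binary_iff (hn : Even n) (hn0 : 0 < n) (g : Fin 2 → Fin n → Fin 2) :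
    IsOptimal n 2 g ↔ Property2 n 2 g := by
  have hstar : diffColumns (fun y (_ : Fin n) => y) = univ := by
    simp [diffColumns]
  rw [isOptimal_iff_score_le hn0 two_pos, property2_binary_iff, ← spread_eq_spread_univ_iff hn]
  have hle : ∀ f, spread (diffColumns f) ≤ spread (univ : Finset (Fin n)) :=
    fun f => spread_mono (subset_univ _)
  have hg := two_mul_score_binary g
  constructor
  · intro h
    have := two_mul_score_binary (n := n) fun y _ => y
    rw [hstar] at this
    have := h (fun y _ => y)
    have := hle g
    omega
  · intro h f
    have := two_mul_score_binary f
    have := hle f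
    omega

end BinaryAlphabet

/-- for `n = 2` with `d ≥ 2`, and likewise for `d = 2` with
even `n > 2`, a deterministic strategy is optimal iff it satisfies
Property 2. -/
theorem stmt_15 :
    (∀ d : ℕ, 2 ≤ d → ∀ g : Fin d → Fin 2 → Fin d,
      (IsOptimal 2 d g ↔ Property2 2 d g)) ∧
    (∀ n : ℕ, 2 < n → Even n → ∀ g : Fin 2 → Fin n → Fin 2,
      (IsOptimal n 2 g ↔ Property2 n 2 g)) :=
  ⟨fun _ hd g => isOptimal_two_iff (by omega) g,
    fun _ hn heven g => isOptimal_binary_iff heven (by omega) g⟩
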